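/- arXiv:1507.01332 — 2 statements merged into one kernel-verified Lean document; each statement's English description precedes it below -/
import Mathlib

section
/- Suppose the switching signal ξ has mean growth rate λ < 0, and let (S, I) be a solution of the switched SIRS system with S(0) > 0, I(0) > 0 and S(0) + I(0) ≤ N. Then lim_{t→∞} I(t) = 0 and lim_{t→∞} S(t) = N. -/
open Filter MeasureTheory

/-- The state space of environments: `true` is `+`, `false` is `−`. -/
abbrev Env := Bool

/-- `ξ` is locally constant (as a function on `[0,∞)`) at the point `t`. -/
def ContPt (ξ : ℝ → Env) (t : ℝ) : Prop :=
  ∀ᶠ s in nhdsWithin t (Set.Ici (0:ℝ)), ξ s = ξ t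

/-- A switching signal: right-continuous, piecewise constant,
with locally finite set of discontinuities in `[0,∞)`. -/
def IsSwitchingSignal (ξ : ℝ → Env) : Prop :=
  (∀ t : ℝ, 0 ≤ t → ∀ᶠ s in nhdsWithin t (Set.Ici t), ξ s = ξ t) ∧
  (∀ T : ℝ, {t : ℝ | 0 ≤ t ∧ t ≤ T ∧ ¬ ContPt ξ t}.Finite)

/-- `(S, I)` is a solution of the switched SIRS system driven by `ξ`:
continuous on `[0,∞)` and satisfying the SIRS equations at every
`t ≥ 0` which is not a discontinuity of `ξ`. -/
def IsSIRSSolution (N : ℝ) (a b c : Env → ℝ) (ξ : ℝ → Env) (S I : ℝ → ℝ) : Prop :=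
  ContinuousOn S (Set.Ici (0:ℝ)) ∧ ContinuousOn I (Set.Ici (0:ℝ)) ∧
  ∀ t : ℝ, 0 ≤ t → ContPt ξ t →
    HasDerivWithinAt S (-(a (ξ t) * S t * I t) + c (ξ t) * (N - S t - I t)) (Set.Ici (0:ℝ)) t ∧
    HasDerivWithinAt I (a (ξ t) * S t * I t - b (ξ t) * I t) (Set.Ici (0:ℝ)) t

/-- `ξ` has mean growth rate `lam`:
`lim_{t→∞} (1/t) ∫₀ᵗ (a(ξ(s))·N − b(ξ(s))) ds = lam`. -/
def HasMeanGrowthRate (N : ℝ) (a b : Env → ℝ) (ξ : ℝ → Env) (lam : ℝ) : Prop :=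
  Tendsto (fun t : ℝ => (1 / t) * ∫ s in (0:ℝ)..t, (a (ξ s) * N - b (ξ s)))
    atTop (nhds lam)

/-!
Along a solution, `I = I 0 * exp (∫ (a S - b))`, and the removed class `R = N - S - I` satisfies
`R' = b I - c R`; hence `R ≥ 0`, so `S ≤ N` and `I t ≤ I 0 * exp (∫₀ᵗ (a N - b))`, which tends
to `0` because the integral grows like `λ t`. Once `b I < c ε / 2`, the same Grönwall comparison
applied to `R - ε / 2` pushes `R` below `ε`, and `S = N - R - I → N`.

The signal has finitely many discontinuities on each bounded interval, and off them every function
involved is differentiable; a continuous function with nonnegative derivative off a finite set is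
monotone, which is all the comparison arguments need.
-/
open Set Real Topology

theorem monotoneOn_Icc_of_hasDerivAt_nonneg_off_finite {f f' : ℝ → ℝ} {D : Set ℝ}
    (hD : D.Finite) {a b : ℝ} (hf : ContinuousOn f (Icc a b))
    (hderiv : ∀ x ∈ Ioo a b \ D, HasDerivAt f (f' x) x) (hf' : ∀ x ∈ Ioo a b \ D, 0 ≤ f' x) :
    MonotoneOn f (Icc a b) := by
  induction D, hD using Set.Finite.induction_on generalizing a b with
  | empty =>
    refine monotoneOn_of_hasDerivWithinAt_nonneg (f' := f') (convex_Icc a b) hf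
      (fun x hx => ?_) (fun x hx => ?_) <;> rw [interior_Icc] at hx
    · exact (hderiv x ⟨hx, id⟩).hasDerivWithinAt
    · exact hf' x ⟨hx, id⟩
  | @insert p D _ _ ih =>
    by_cases hp : p ∈ Ioo a b
    · have left : Ioo a p \ D ⊆ Ioo a b \ insert p D := fun x hx =>
        ⟨⟨hx.1.1, hx.1.2.trans hp.2⟩, by simp [hx.1.2.ne, hx.2]⟩
      have right : Ioo p b \ D ⊆ Ioo a b \ insert p D := fun x hx =>
        ⟨⟨hp.1.trans hx.1.1, hx.1.2⟩, by simp [hx.1.1.ne', hx.2]⟩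
      rw [← Icc_union_Icc_eq_Icc hp.1.le hp.2.le] at hf ⊢
      exact MonotoneOn.union_right
        (ih (hf.mono subset_union_left) (fun x hx => hderiv x (left hx))
          (fun x hx => hf' x (left hx)))
        (ih (hf.mono subset_union_right) (fun x hx => hderiv x (right hx))
          (fun x hx => hf' x (right hx)))
        (isGreatest_Icc hp.1.le) (isLeast_Icc hp.2.le)
    · rw [sdiff_insert_of_notMem hp] at hderiv hf'
      exact ih hf hderiv hf'

theorem ContPt.continuousWithinAt_comp {ξ : ℝ → Env} {F : Env → ℝ → ℝ} {t : ℝ}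
    (hct : ContPt ξ t) (hF : ContinuousWithinAt (F (ξ t)) (Ici 0) t) :
    ContinuousWithinAt (fun s => F (ξ s) s) (Ici 0) t :=
  hF.congr_of_eventuallyEq (hct.mono fun s hs => by simp only [hs]) rfl

namespace IsSwitchingSignal

variable {ξ : ℝ → Env}

theorem monotoneOn_Ici (hξ : IsSwitchingSignal ξ) {f f' : ℝ → ℝ} {a : ℝ} (ha : 0 ≤ a)
    (hf : ContinuousOn f (Ici a)) (hderiv : ∀ t, a < t → ContPt ξ t → HasDerivAt f (f' t) t)
    (hf' : ∀ t, a < t → ContPt ξ t → 0 ≤ f' t) : MonotoneOn f (Ici a) := by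
  intro x hx y hy hxy
  have hgood : ∀ t ∈ Ioo a y \ {t | 0 ≤ t ∧ t ≤ y ∧ ¬ContPt ξ t}, a < t ∧ ContPt ξ t :=
    fun t ht => ⟨ht.1.1, not_not.1 fun h => ht.2 ⟨ha.trans ht.1.1.le, ht.1.2.le, h⟩⟩
  exact monotoneOn_Icc_of_hasDerivAt_nonneg_off_finite (hξ.2 y) (hf.mono Icc_subset_Ici_self)
    (fun t ht => hderiv t (hgood t ht).1 (hgood t ht).2)
    (fun t ht => hf' t (hgood t ht).1 (hgood t ht).2) ⟨hx, hxy⟩ ⟨hy, le_rfl⟩ hxy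

theorem le_mul_exp_of_deriv_le (hξ : IsSwitchingSignal ξ) {u u' K k : ℝ → ℝ} {a : ℝ}
    (ha : 0 ≤ a) (hu : ContinuousOn u (Ici a)) (hK : ContinuousOn K (Ici a))
    (hu' : ∀ t, a < t → ContPt ξ t → HasDerivAt u (u' t) t)
    (hK' : ∀ t, a < t → ContPt ξ t → HasDerivAt K (k t) t)
    (hle : ∀ t, a < t → ContPt ξ t → u' t ≤ k t * u t) {t : ℝ} (ht : a ≤ t) :
    u t ≤ u a * exp (K t - K a) := by
  have hmono : MonotoneOn (fun s => -(u s * exp (-K s))) (Ici a) := by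
    refine hξ.monotoneOn_Ici ha (hu.mul (hK.neg.rexp)).neg
      (fun s hs hcs => ((hu' s hs hcs).mul (hK' s hs hcs).neg.exp).neg) fun s hs hcs => ?_
    have := mul_le_mul_of_nonneg_right (hle s hs hcs) (exp_pos (-K s)).le
    simp only [Pi.neg_apply]
    linarith
  have key : u t * exp (-K t) ≤ u a * exp (-K a) := neg_le_neg_iff.1 (hmono self_mem_Ici ht ht)
  calc u t = u t * exp (-K t) * exp (K t) := by rw [mul_assoc, ← exp_add]; simp
    _ ≤ u a * exp (-K a) * exp (K t) := by gcongr
    _ = u a * exp (K t - K a) := by rw [mul_assoc, ← exp_add]; ring_nf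

section Integral

variable {F : Env → ℝ → ℝ}

theorem integrableOn_comp (hξ : IsSwitchingSignal ξ) (hF : ∀ σ, ContinuousOn (F σ) (Ici 0))
    (T : ℝ) : IntegrableOn (fun s => F (ξ s) s) (Icc 0 T) := by
  set D := {t : ℝ | 0 ≤ t ∧ t ≤ T ∧ ¬ContPt ξ t}
  have hcont : ContinuousOn (fun s => F (ξ s) s) (Icc 0 T \ D) := fun t ht =>
    ((not_not.1 fun h => ht.2 ⟨ht.1.1, ht.1.2, h⟩ : ContPt ξ t).continuousWithinAt_comp
      (hF _ t ht.1.1)).mono fun s hs => hs.1.1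
  obtain ⟨M, hM⟩ : ∃ M, ∀ σ, ∀ s ∈ Icc 0 T, ‖F σ s‖ ≤ M := by
    choose C hC using fun σ => isCompact_Icc.exists_bound_of_continuousOn
      ((hF σ).mono Icc_subset_Ici_self : ContinuousOn (F σ) (Icc 0 T))
    obtain ⟨M, hM⟩ := Finite.exists_le C
    exact ⟨M, fun σ s hs => (hC σ s hs).trans (hM σ)⟩
  refine ⟨?_, HasFiniteIntegral.restrict_of_bounded (C := M) measure_Icc_lt_top
    (ae_restrict_of_forall_mem measurableSet_Icc fun s hs => hM _ s hs)⟩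
  rw [← Measure.restrict_congr_set (sdiff_null_ae_eq_self ((hξ.2 T).measure_zero _))]
  exact hcont.aestronglyMeasurable (measurableSet_Icc.diff (hξ.2 T).measurableSet)

theorem intervalIntegrable_comp (hξ : IsSwitchingSignal ξ)
    (hF : ∀ σ, ContinuousOn (F σ) (Ici 0)) {T : ℝ} (hT : 0 ≤ T) :
    IntervalIntegrable (fun s => F (ξ s) s) volume 0 T :=
  (intervalIntegrable_iff_integrableOn_Icc_of_le hT).2 (hξ.integrableOn_comp hF T)

theorem continuousOn_integral_comp (hξ : IsSwitchingSignal ξ)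
    (hF : ∀ σ, ContinuousOn (F σ) (Ici 0)) :
    ContinuousOn (fun u => ∫ s in 0..u, F (ξ s) s) (Ici 0) := by
  intro t ht
  have hT : (0 : ℝ) ≤ t + 1 := by linarith [mem_Ici.1 ht]
  have hcont := intervalIntegral.continuousOn_primitive_interval'
    (hξ.intervalIntegrable_comp hF hT) left_mem_uIcc
  rw [uIcc_of_le hT] at hcont
  refine (hcont t ⟨ht, by linarith⟩).mono_of_mem_nhdsWithin ?_
  rw [← Ici_inter_Iic]
  exact inter_mem_nhdsWithin _ (Iic_mem_nhds (lt_add_one t))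

theorem hasDerivAt_integral_comp (hξ : IsSwitchingSignal ξ)
    (hF : ∀ σ, ContinuousOn (F σ) (Ici 0)) {t : ℝ} (ht : 0 < t) (hct : ContPt ξ t) :
    HasDerivAt (fun u => ∫ s in 0..u, F (ξ s) s) (F (ξ t) t) t :=
  intervalIntegral.integral_hasDerivAt_right (hξ.intervalIntegrable_comp hF ht.le)
    ⟨Icc 0 (t + 1), Icc_mem_nhds ht (lt_add_one t),
      (hξ.integrableOn_comp hF _).aestronglyMeasurable⟩
    ((hct.continuousWithinAt_comp (hF _ t ht.le)).continuousAt (Ici_mem_nhds ht))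

end Integral

theorem tendsto_integral_comp_atTop (hξ : IsSwitchingSignal ξ) {g : Env → ℝ}
    (hg : ∀ σ, 0 < g σ) : Tendsto (fun t => ∫ s in 0..t, g (ξ s)) atTop atTop := by
  obtain ⟨σ₀, hσ₀⟩ := Finite.exists_min g
  refine tendsto_atTop_mono' _ ?_ (tendsto_id.const_mul_atTop (hg σ₀))
  filter_upwards [eventually_ge_atTop 0] with t ht
  have := intervalIntegral.integral_mono_on ht intervalIntegrable_const
    (hξ.intervalIntegrable_comp (F := fun σ _ => g σ) (fun _ => continuousOn_const) ht)
    fun s _ => hσ₀ (ξ s)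
  simpa [mul_comm] using this

end IsSwitchingSignal

theorem HasMeanGrowthRate.tendsto_integral_atBot {N lam : ℝ} {a b : Env → ℝ} {ξ : ℝ → Env}
    (h : HasMeanGrowthRate N a b ξ lam) (hlam : lam < 0) :
    Tendsto (fun t => ∫ s in 0..t, (a (ξ s) * N - b (ξ s))) atTop atBot := by
  refine (tendsto_id.atTop_mul_neg hlam h).congr' ?_
  filter_upwards [eventually_gt_atTop 0] with t ht
  simp [ht.ne']

namespace IsSIRSSolution

variable {N : ℝ} {a b c : Env → ℝ} {ξ : ℝ → Env} {S I : ℝ → ℝ}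

theorem hasDerivAt_infected (hsol : IsSIRSSolution N a b c ξ S I) {t : ℝ} (ht : 0 < t)
    (hct : ContPt ξ t) : HasDerivAt I (a (ξ t) * S t * I t - b (ξ t) * I t) t :=
  (hsol.2.2 t ht.le hct).2.hasDerivAt (Ici_mem_nhds ht)

theorem hasDerivAt_removed (hsol : IsSIRSSolution N a b c ξ S I) {t : ℝ} (ht : 0 < t)
    (hct : ContPt ξ t) :
    HasDerivAt (fun s => N - S s - I s) (b (ξ t) * I t - c (ξ t) * (N - S t - I t)) t :=
  (((hsol.2.2 t ht.le hct).1.hasDerivAt (Ici_mem_nhds ht)).const_sub N).sub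
    (hsol.hasDerivAt_infected ht hct) |>.congr_deriv (by ring)

theorem continuousOn_removed (hsol : IsSIRSSolution N a b c ξ S I) :
    ContinuousOn (fun s => N - S s - I s) (Ici 0) :=
  (continuousOn_const.sub hsol.1).sub hsol.2.1

theorem infected_eq (hsol : IsSIRSSolution N a b c ξ S I) (hξ : IsSwitchingSignal ξ) {t : ℝ}
    (ht : 0 ≤ t) : I t = I 0 * exp (∫ s in 0..t, (a (ξ s) * S s - b (ξ s))) := by
  have hF : ∀ σ, ContinuousOn (fun s => a σ * S s - b σ) (Ici 0) := fun σ =>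
    (continuousOn_const.mul hsol.1).sub continuousOn_const
  have hK := hξ.continuousOn_integral_comp hF
  have hK' := fun t (ht : 0 < t) hct => hξ.hasDerivAt_integral_comp hF ht hct
  have hle := hξ.le_mul_exp_of_deriv_le le_rfl hsol.2.1 hK
    (fun t ht hct => hsol.hasDerivAt_infected ht hct) hK' (fun t _ _ => le_of_eq (by ring)) ht
  have hge := hξ.le_mul_exp_of_deriv_le (u := fun s => -I s) le_rfl hsol.2.1.neg hK
    (fun t ht hct => (hsol.hasDerivAt_infected ht hct).neg) hK'
    (fun t _ _ => le_of_eq (by ring)) ht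
  simp only [intervalIntegral.integral_same, sub_zero] at hle hge
  linarith

theorem infected_nonneg (hsol : IsSIRSSolution N a b c ξ S I) (hξ : IsSwitchingSignal ξ)
    (hI0 : 0 ≤ I 0) {t : ℝ} (ht : 0 ≤ t) : 0 ≤ I t := by
  rw [hsol.infected_eq hξ ht]
  positivity

theorem removed_nonneg (hsol : IsSIRSSolution N a b c ξ S I) (hξ : IsSwitchingSignal ξ)
    (hb : ∀ σ, 0 ≤ b σ) (hI0 : 0 ≤ I 0) (hsum : S 0 + I 0 ≤ N) {t : ℝ} (ht : 0 ≤ t) :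
    0 ≤ N - S t - I t := by
  have hF : ∀ σ, ContinuousOn (fun _ : ℝ => c σ) (Ici 0) := fun _ => continuousOn_const
  have h := hξ.le_mul_exp_of_deriv_le (u := fun s => -(N - S s - I s))
    (K := fun u => -∫ s in 0..u, c (ξ s)) (k := fun t => -c (ξ t)) le_rfl
    hsol.continuousOn_removed.neg (hξ.continuousOn_integral_comp hF).neg
    (fun t ht hct => (hsol.hasDerivAt_removed ht hct).neg)
    (fun t ht hct => (hξ.hasDerivAt_integral_comp hF ht hct).neg)
    (fun t ht hct => by linarith [mul_nonneg (hb (ξ t)) (hsol.infected_nonneg hξ hI0 ht.le)]) ht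
  simp only [intervalIntegral.integral_same, neg_zero, sub_zero] at h
  nlinarith [exp_pos (-∫ s in 0..t, c (ξ s))]

theorem susceptible_le (hsol : IsSIRSSolution N a b c ξ S I) (hξ : IsSwitchingSignal ξ)
    (hb : ∀ σ, 0 ≤ b σ) (hI0 : 0 ≤ I 0) (hsum : S 0 + I 0 ≤ N) {t : ℝ} (ht : 0 ≤ t) :
    S t ≤ N := by
  linarith [hsol.removed_nonneg hξ hb hI0 hsum ht, hsol.infected_nonneg hξ hI0 ht]

theorem infected_le_mul_exp (hsol : IsSIRSSolution N a b c ξ S I) (hξ : IsSwitchingSignal ξ)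
    (ha : ∀ σ, 0 ≤ a σ) (hb : ∀ σ, 0 ≤ b σ) (hI0 : 0 ≤ I 0) (hsum : S 0 + I 0 ≤ N) {t : ℝ}
    (ht : 0 ≤ t) : I t ≤ I 0 * exp (∫ s in 0..t, (a (ξ s) * N - b (ξ s))) := by
  rw [hsol.infected_eq hξ ht]
  gcongr
  refine intervalIntegral.integral_mono_on ht
    (hξ.intervalIntegrable_comp (F := fun σ s => a σ * S s - b σ)
      (fun σ => (continuousOn_const.mul hsol.1).sub continuousOn_const) ht)
    (hξ.intervalIntegrable_comp (F := fun σ _ => a σ * N - b σ)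
      (fun _ => continuousOn_const) ht) fun s hs => ?_
  have := mul_le_mul_of_nonneg_left (hsol.susceptible_le hξ hb hI0 hsum hs.1) (ha (ξ s))
  linarith

theorem tendsto_infected_zero (hsol : IsSIRSSolution N a b c ξ S I) (hξ : IsSwitchingSignal ξ)
    (ha : ∀ σ, 0 ≤ a σ) (hb : ∀ σ, 0 ≤ b σ) (hI0 : 0 ≤ I 0) (hsum : S 0 + I 0 ≤ N) {lam : ℝ}
    (hmean : HasMeanGrowthRate N a b ξ lam) (hlam : lam < 0) : Tendsto I atTop (𝓝 0) := by
  have hupper : Tendsto (fun t => I 0 * exp (∫ s in 0..t, (a (ξ s) * N - b (ξ s)))) atTop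
      (𝓝 0) := by
    simpa using (tendsto_exp_atBot.comp (hmean.tendsto_integral_atBot hlam)).const_mul (I 0)
  refine tendsto_of_tendsto_of_tendsto_of_le_of_le' tendsto_const_nhds hupper ?_ ?_
  · filter_upwards [eventually_ge_atTop 0] with t ht using hsol.infected_nonneg hξ hI0 ht
  · filter_upwards [eventually_ge_atTop 0] with t ht
      using hsol.infected_le_mul_exp hξ ha hb hI0 hsum ht

theorem tendsto_removed_zero (hsol : IsSIRSSolution N a b c ξ S I) (hξ : IsSwitchingSignal ξ)
    (hb : ∀ σ, 0 ≤ b σ) (hc : ∀ σ, 0 < c σ) (hI0 : 0 ≤ I 0) (hsum : S 0 + I 0 ≤ N)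
    (hI : Tendsto I atTop (𝓝 0)) : Tendsto (fun t => N - S t - I t) atTop (𝓝 0) := by
  refine tendsto_order.2 ⟨fun ε hε => ?_, fun ε hε => ?_⟩
  · filter_upwards [eventually_ge_atTop 0] with t ht
      using hε.trans_le (hsol.removed_nonneg hξ hb hI0 hsum ht)
  have hsmall : ∀ᶠ t in atTop, ∀ σ, b σ * I t < c σ * (ε / 2) := eventually_all.2 fun σ =>
    (by simpa using hI.const_mul (b σ) : Tendsto (fun t => b σ * I t) atTop (𝓝 0))
      |>.eventually_lt_const (by have := hc σ; positivity)
  obtain ⟨T₀, hT₀⟩ := eventually_atTop.1 hsmall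
  set T := max T₀ 0
  have hT : 0 ≤ T := le_max_right _ _
  set K := fun u => -∫ s in 0..u, c (ξ s)
  have hF : ∀ σ, ContinuousOn (fun _ : ℝ => c σ) (Ici 0) := fun _ => continuousOn_const
  have hbound : ∀ t, T ≤ t →
      N - S t - I t - ε / 2 ≤ (N - S T - I T - ε / 2) * exp (K t - K T) := fun t ht =>
    hξ.le_mul_exp_of_deriv_le (u := fun s => N - S s - I s - ε / 2) (K := K)
      (k := fun t => -c (ξ t)) hT
      ((hsol.continuousOn_removed.sub continuousOn_const).mono (Ici_subset_Ici.2 hT))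
      ((hξ.continuousOn_integral_comp hF).neg.mono (Ici_subset_Ici.2 hT))
      (fun t ht hct => (hsol.hasDerivAt_removed (hT.trans_lt ht) hct).sub_const _)
      (fun t ht hct => (hξ.hasDerivAt_integral_comp hF (hT.trans_lt ht) hct).neg)
      (fun t ht hct => by linarith [hT₀ t ((le_max_left _ _).trans ht.le) (ξ t)]) ht
  have hdecay : Tendsto (fun t => K t - K T) atTop atBot :=
    tendsto_atBot_add_const_right _ _
      (tendsto_neg_atTop_atBot.comp (hξ.tendsto_integral_comp_atTop hc))
  have hlim : Tendsto (fun t => ε / 2 + (N - S T - I T - ε / 2) * exp (K t - K T)) atTop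
      (𝓝 (ε / 2)) := by
    simpa using ((tendsto_exp_atBot.comp hdecay).const_mul _).const_add (ε / 2)
  filter_upwards [eventually_ge_atTop T, hlim.eventually_lt_const (half_lt_self hε)]
    with t ht hlt
  linarith [hbound t ht]

end IsSIRSSolution

theorem sirs_extinction_of_disease_general
    (N : ℝ) (a b c : Env → ℝ)
    (ha : ∀ σ, 0 < a σ) (hb : ∀ σ, 0 < b σ) (hc : ∀ σ, 0 < c σ)
    (ξ : ℝ → Env) (hξ : IsSwitchingSignal ξ)
    (lam : ℝ) (hlam : lam < 0) (hmean : HasMeanGrowthRate N a b ξ lam)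
    (S I : ℝ → ℝ) (hsol : IsSIRSSolution N a b c ξ S I)
    (hI0 : 0 < I 0) (hsum : S 0 + I 0 ≤ N) :
    Filter.Tendsto I Filter.atTop (nhds 0) ∧
    Filter.Tendsto S Filter.atTop (nhds N) := by
  have hI := hsol.tendsto_infected_zero hξ (fun σ => (ha σ).le) (fun σ => (hb σ).le) hI0.le hsum
    hmean hlam
  have hR := hsol.tendsto_removed_zero hξ (fun σ => (hb σ).le) hc hI0.le hsum hI
  refine ⟨hI, ?_⟩
  simpa using (tendsto_const_nhds (x := N)).sub (hR.add hI)

/-- if `λ < 0` then the disease dies out: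
`I(t) → 0` and `S(t) → N` as `t → ∞`. -/
theorem sirs_extinction_of_disease
    (N : ℝ) (hN : 0 < N) (a b c : Env → ℝ)
    (ha : ∀ σ, 0 < a σ) (hb : ∀ σ, 0 < b σ) (hc : ∀ σ, 0 < c σ)
    (ξ : ℝ → Env) (hξ : IsSwitchingSignal ξ)
    (lam : ℝ) (hlam : lam < 0) (hmean : HasMeanGrowthRate N a b ξ lam)
    (S I : ℝ → ℝ) (hsol : IsSIRSSolution N a b c ξ S I)
    (hS0 : 0 < S 0) (hI0 : 0 < I 0) (hsum : S 0 + I 0 ≤ N) :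
    Filter.Tendsto I Filter.atTop (nhds 0) ∧
    Filter.Tendsto S Filter.atTop (nhds N) :=
  sirs_extinction_of_disease_general N a b c ha hb hc ξ hξ lam hlam hmean S I hsol hI0 hsum
end

section
/- Suppose b(+)/a(+) ≤ b(−)/a(−) and b(+)/a(+) < N. Then there exists a constant S_min > 0, depending only on N, a, b, c, such that for every switching signal ξ and every solution (S, I) of the switched SIRS system with S(0) > 0, I(0) > 0 and S(0) + I(0) ≤ N, one has liminf_{t→∞} S(t) > S_min. -/
/-!
The simplex `0 ≤ S`, `0 ≤ I`, `S + I ≤ N` is invariant, and on it `S' ≥ -A N S` with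
`A = max a`. Pick `δ > 0` with `a δ < b` uniformly: while `S ≤ δ` the infected decay exponentially
at a uniform rate, so after a uniform time `τ` they are negligible and the inflow
`c (N - S - I)` makes `S` grow linearly. Hence `S` cannot stay below `δ` forever, and during an
excursion below `δ` it loses at most the factor `exp (-A N τ)` before it starts to grow, so
eventually `S ≥ δ exp (-A N τ)`.
-/

open Filter MeasureTheory

open Set Topology

theorem le_of_hasDerivWithinAt_Ici_nonneg {f f' : ℝ → ℝ} {a b : ℝ} (hab : a ≤ b)
    (hf : ContinuousOn f (Icc a b)) (hder : ∀ x ∈ Ioo a b, HasDerivWithinAt f (f' x) (Ici x) x)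
    (hnonneg : ∀ x ∈ Ioo a b, 0 ≤ f' x) : f a ≤ f b := by
  rcases hab.eq_or_lt with rfl | hab
  · exact le_rfl
  have hle : ∀ a' ∈ Ioc a b, f a' ≤ f b := fun a' ha' =>
    image_le_of_deriv_right_le_deriv_boundary continuousOn_const
      (fun x _ => hasDerivWithinAt_const x _ (f a')) le_rfl
      (hf.mono (Icc_subset_Icc ha'.1.le le_rfl))
      (fun x hx => hder x ⟨ha'.1.trans_le hx.1, hx.2⟩)
      (fun x hx => hnonneg x ⟨ha'.1.trans_le hx.1, hx.2⟩) (right_mem_Icc.2 ha'.2)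
  have : (𝓝[Ioc a b] a).NeBot := left_nhdsWithin_Ioc_neBot hab
  exact le_of_tendsto ((hf a (left_mem_Icc.2 hab.le)).mono Ioc_subset_Icc_self)
    (eventually_mem_nhdsWithin.mono hle)

theorem le_of_hasDerivWithinAt_Ici_nonneg_of_finite {f f' : ℝ → ℝ} {E : Set ℝ} (hE : E.Finite)
    {a b : ℝ} (hab : a ≤ b) (hf : ContinuousOn f (Icc a b))
    (hder : ∀ x ∈ Ioo a b \ E, HasDerivWithinAt f (f' x) (Ici x) x)
    (hnonneg : ∀ x ∈ Ioo a b \ E, 0 ≤ f' x) : f a ≤ f b := by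
  induction E, hE using Set.Finite.induction_on generalizing a b with
  | empty =>
    simp only [sdiff_empty] at hder hnonneg
    exact le_of_hasDerivWithinAt_Ici_nonneg hab hf hder hnonneg
  | @insert m E _ _ ih =>
    have restrict : ∀ {u v}, u ≤ v → a ≤ u → v ≤ b → m ∉ Ioo u v → f u ≤ f v := by
      intro u v huv hau hvb hm
      have hsub : Ioo u v \ E ⊆ Ioo a b \ insert m E := fun x hx =>
        ⟨⟨hau.trans_lt hx.1.1, hx.1.2.trans_le hvb⟩,
          by rintro (rfl | hxE); exacts [hm hx.1, hx.2 hxE]⟩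
      exact ih huv (hf.mono (Icc_subset_Icc hau hvb)) (fun x hx => hder x (hsub hx))
        (fun x hx => hnonneg x (hsub hx))
    by_cases hm : m ∈ Ioo a b
    · exact (restrict hm.1.le le_rfl hm.2.le (fun h => h.2.false)).trans
        (restrict hm.2.le hm.1.le le_rfl (fun h => h.1.false))
    · exact restrict hab le_rfl le_rfl hm

namespace IsSwitchingSignal

variable {ξ : ℝ → Env}

theorem le_of_hasDerivWithinAt_nonneg (hξ : IsSwitchingSignal ξ) {g g' : ℝ → ℝ} {u v : ℝ}
    (hu : 0 ≤ u) (huv : u ≤ v) (hg : ContinuousOn g (Icc u v))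
    (hder : ∀ x ∈ Ioo u v, ContPt ξ x → HasDerivWithinAt g (g' x) (Ici x) x)
    (hnonneg : ∀ x ∈ Ioo u v, ContPt ξ x → 0 ≤ g' x) : g u ≤ g v := by
  have hcont : ∀ x ∈ Ioo u v \ {t | 0 ≤ t ∧ t ≤ v ∧ ¬ ContPt ξ t}, ContPt ξ x := fun x hx =>
    by_contra fun h => hx.2 ⟨hu.trans hx.1.1.le, hx.1.2.le, h⟩
  exact le_of_hasDerivWithinAt_Ici_nonneg_of_finite (hξ.2 v) huv hg
    (fun x hx => hder x hx.1 (hcont x hx)) (fun x hx => hnonneg x hx.1 (hcont x hx))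

theorem add_mul_le_of_hasDerivWithinAt (hξ : IsSwitchingSignal ξ) {f f' : ℝ → ℝ} {γ u v : ℝ}
    (hu : 0 ≤ u) (huv : u ≤ v) (hf : ContinuousOn f (Icc u v))
    (hder : ∀ x ∈ Ioo u v, ContPt ξ x → HasDerivWithinAt f (f' x) (Ici x) x)
    (hineq : ∀ x ∈ Ioo u v, ContPt ξ x → γ ≤ f' x) : f u + γ * (v - u) ≤ f v := by
  have key := hξ.le_of_hasDerivWithinAt_nonneg (g := fun s => f s - γ * s) hu huv
    (hf.sub (continuousOn_const.mul continuousOn_id))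
    (fun x hx hx' => (hder x hx hx').sub ((hasDerivWithinAt_id x _).const_mul γ))
    (fun x hx hx' => by simpa using hineq x hx hx')
  linarith

theorem mul_exp_le_of_hasDerivWithinAt (hξ : IsSwitchingSignal ξ) {f f' : ℝ → ℝ} {μ u v : ℝ}
    (hu : 0 ≤ u) (huv : u ≤ v) (hf : ContinuousOn f (Icc u v))
    (hder : ∀ x ∈ Ioo u v, ContPt ξ x → HasDerivWithinAt f (f' x) (Ici x) x)
    (hineq : ∀ x ∈ Ioo u v, ContPt ξ x → μ * f x ≤ f' x) :
    f u * Real.exp (μ * (v - u)) ≤ f v := by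
  have hexp : ∀ x, HasDerivAt (fun s => Real.exp (-(μ * s))) (Real.exp (-(μ * x)) * -μ) x :=
    fun x => by simpa using ((hasDerivAt_id x).const_mul μ).neg.exp
  have key := hξ.le_of_hasDerivWithinAt_nonneg (g := fun s => f s * Real.exp (-(μ * s))) hu huv
    (hf.mul (by fun_prop)) (fun x hx hx' => (hder x hx hx').mul (hexp x).hasDerivWithinAt)
    (fun x hx hx' => by
      have := mul_nonneg (sub_nonneg.2 (hineq x hx hx')) (Real.exp_pos (-(μ * x))).le
      linarith)
  calc f u * Real.exp (μ * (v - u))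
      = f u * Real.exp (-(μ * u)) * Real.exp (μ * v) := by
        rw [mul_assoc, ← Real.exp_add]; ring_nf
    _ ≤ f v * Real.exp (-(μ * v)) * Real.exp (μ * v) := by gcongr
    _ = f v := by rw [mul_assoc, ← Real.exp_add]; simp

end IsSwitchingSignal

theorem pos_of_forall_Ico_pos {f : ℝ → ℝ} (hf : ContinuousOn f (Ici 0)) (h0 : 0 < f 0)
    (hstep : ∀ t, 0 < t → (∀ s ∈ Ico 0 t, 0 < f s) → 0 < f t) {t : ℝ} (ht : 0 ≤ t) :
    0 < f t := by
  by_contra! hft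
  set Z := Icc 0 t ∩ f ⁻¹' Iic 0
  have hZ : IsClosed Z :=
    (hf.mono Icc_subset_Ici_self).preimage_isClosed_of_isClosed isClosed_Icc isClosed_Iic
  have hZbdd : BddBelow Z := ⟨0, fun s hs => hs.1.1⟩
  have hmem : sInf Z ∈ Z := hZ.csInf_mem ⟨t, ⟨right_mem_Icc.2 ht, hft⟩⟩ hZbdd
  have hpos : 0 < sInf Z := hmem.1.1.lt_of_ne fun h => by
    have := hmem.2; rw [← h] at this; exact (h0.trans_le this).false
  refine (hstep _ hpos fun s hs => ?_).not_ge hmem.2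
  by_contra! hfs
  exact (csInf_le hZbdd ⟨⟨hs.1, hs.2.le.trans hmem.1.2⟩, hfs⟩).not_gt hs.2

theorem exists_mem_Icc_le_forall_Ioc_lt {f : ℝ → ℝ} {a b δ : ℝ} (hab : a ≤ b)
    (hf : ContinuousOn f (Icc a b)) (ha : δ ≤ f a) :
    ∃ u ∈ Icc a b, δ ≤ f u ∧ ∀ s ∈ Ioc u b, f s < δ := by
  set A := Icc a b ∩ f ⁻¹' Ici δ
  have hAbdd : BddAbove A := ⟨b, fun s hs => hs.1.2⟩
  have hmem : sSup A ∈ A :=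
    (hf.preimage_isClosed_of_isClosed isClosed_Icc isClosed_Ici).csSup_mem
      ⟨a, left_mem_Icc.2 hab, ha⟩ hAbdd
  refine ⟨sSup A, hmem.1, hmem.2, fun s hs => ?_⟩
  by_contra! hfs
  exact (le_csSup hAbdd ⟨⟨hmem.1.1.trans hs.1.le, hs.2⟩, hfs⟩).not_gt hs.1

theorem bddBelow_image_mul_sub {ξ : ℝ → Env} {u : ℝ → ℝ} (hu : ContinuousOn u (Ici 0))
    (p q : Env → ℝ) (T : ℝ) : BddBelow ((fun x => p (ξ x) * u x - q (ξ x)) '' Icc 0 T) := by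
  have hK : IsCompact (u '' Icc 0 T) :=
    isCompact_Icc.image_of_continuousOn (hu.mono Icc_subset_Ici_self)
  refine BddBelow.mono ?_ ((Set.finite_univ (α := Env)).bddBelow_biUnion.2 fun σ _ =>
    (hK.image (f := fun y => p σ * y - q σ) (by fun_prop)).bddBelow)
  rintro _ ⟨x, hx, rfl⟩
  exact mem_biUnion (mem_univ (ξ x)) ⟨u x, ⟨x, hx, rfl⟩, rfl⟩

theorem IsSwitchingSignal.pos_of_hasDerivWithinAt_ge_mul {ξ : ℝ → Env} (hξ : IsSwitchingSignal ξ)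
    {f f' φ : ℝ → ℝ} (hf : ContinuousOn f (Ici 0)) (hf0 : 0 < f 0)
    (hφ : ∀ T, BddBelow (φ '' Icc 0 T))
    (hder : ∀ x, 0 ≤ x → ContPt ξ x → HasDerivWithinAt f (f' x) (Ici x) x)
    (hineq : ∀ x, 0 ≤ x → ContPt ξ x → φ x * f x ≤ f' x) {t : ℝ} (ht : 0 ≤ t) : 0 < f t := by
  refine pos_of_forall_Ico_pos hf hf0 (fun t ht hpos => ?_) ht
  obtain ⟨M, hM⟩ := hφ t
  have key := hξ.mul_exp_le_of_hasDerivWithinAt (μ := M) le_rfl ht.le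
    (hf.mono Icc_subset_Ici_self) (fun x hx hx' => hder x hx.1.le hx')
    (fun x hx hx' => (mul_le_mul_of_nonneg_right (hM ⟨x, Ioo_subset_Icc_self hx, rfl⟩)
      (hpos x ⟨hx.1.le, hx.2⟩).le).trans (hineq x hx.1.le hx'))
  exact (mul_pos hf0 (Real.exp_pos _)).trans_le key

namespace IsSIRSSolution

variable {N : ℝ} {a b c : Env → ℝ} {ξ : ℝ → Env} {S I : ℝ → ℝ}

theorem hasDerivWithinAt_susceptible (h : IsSIRSSolution N a b c ξ S I) {x : ℝ} (hx : 0 ≤ x)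
    (hξx : ContPt ξ x) :
    HasDerivWithinAt S (-(a (ξ x) * S x * I x) + c (ξ x) * (N - S x - I x)) (Ici x) x :=
  (h.2.2 x hx hξx).1.mono (Ici_subset_Ici.2 hx)

theorem hasDerivWithinAt_infected (h : IsSIRSSolution N a b c ξ S I) {x : ℝ} (hx : 0 ≤ x)
    (hξx : ContPt ξ x) : HasDerivWithinAt I (a (ξ x) * S x * I x - b (ξ x) * I x) (Ici x) x :=
  (h.2.2 x hx hξx).2.mono (Ici_subset_Ici.2 hx)

theorem hasDerivWithinAt_recovered (h : IsSIRSSolution N a b c ξ S I) {x : ℝ} (hx : 0 ≤ x)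
    (hξx : ContPt ξ x) :
    HasDerivWithinAt (fun t => N - S t - I t) (b (ξ x) * I x - c (ξ x) * (N - S x - I x))
      (Ici x) x :=
  (((h.hasDerivWithinAt_susceptible hx hξx).const_sub N).sub
    (h.hasDerivWithinAt_infected hx hξx)).congr_deriv (by ring)

theorem infected_pos (hξ : IsSwitchingSignal ξ) (h : IsSIRSSolution N a b c ξ S I)
    (hI0 : 0 < I 0) {t : ℝ} (ht : 0 ≤ t) : 0 < I t :=
  hξ.pos_of_hasDerivWithinAt_ge_mul h.2.1 hI0 (bddBelow_image_mul_sub h.1 a b)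
    (fun _ hx hξx => h.hasDerivWithinAt_infected hx hξx) (fun _ _ _ => le_of_eq (by ring)) ht

theorem susceptible_add_infected_le (hξ : IsSwitchingSignal ξ) (h : IsSIRSSolution N a b c ξ S I)
    (hb : ∀ σ, 0 ≤ b σ) (hc : ∀ σ, 0 ≤ c σ) (hI : ∀ t, 0 ≤ t → 0 ≤ I t)
    (hSI0 : S 0 + I 0 ≤ N) {t : ℝ} (ht : 0 ≤ t) : S t + I t ≤ N := by
  by_contra! hlt
  have hR : ContinuousOn (fun t => N - S t - I t) (Icc 0 t) :=
    (continuousOn_const.sub h.1).sub h.2.1 |>.mono Icc_subset_Ici_self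
  obtain ⟨u, hu, hRu, hneg⟩ := exists_mem_Icc_le_forall_Ioc_lt (δ := 0) ht hR (by linarith)
  have hmono := hξ.le_of_hasDerivWithinAt_nonneg hu.1 hu.2 (hR.mono (Icc_subset_Icc hu.1 le_rfl))
    (fun x hx hξx => h.hasDerivWithinAt_recovered (hu.1.trans hx.1.le) hξx)
    (fun x hx _ => by
      have := mul_nonneg (hb (ξ x)) (hI x (hu.1.trans hx.1.le))
      have := mul_nonpos_of_nonneg_of_nonpos (hc (ξ x)) (hneg x (Ioo_subset_Ioc_self hx)).le
      linarith)
  linarith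

theorem susceptible_pos (hξ : IsSwitchingSignal ξ) (h : IsSIRSSolution N a b c ξ S I)
    (hc : ∀ σ, 0 ≤ c σ) (hSI : ∀ t, 0 ≤ t → S t + I t ≤ N) (hS0 : 0 < S 0) {t : ℝ}
    (ht : 0 ≤ t) : 0 < S t :=
  hξ.pos_of_hasDerivWithinAt_ge_mul h.1 hS0
    (bddBelow_image_mul_sub h.2.1 (fun σ => -a σ) 0)
    (fun _ hx hξx => h.hasDerivWithinAt_susceptible hx hξx)
    (fun x hx _ => by
      have := mul_nonneg (hc (ξ x)) (sub_nonneg.2 (hSI x hx))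
      simp only [Pi.zero_apply]
      linarith) ht

theorem nonneg_and_add_le (hξ : IsSwitchingSignal ξ) (h : IsSIRSSolution N a b c ξ S I)
    (hb : ∀ σ, 0 ≤ b σ) (hc : ∀ σ, 0 ≤ c σ) (hS0 : 0 < S 0) (hI0 : 0 < I 0)
    (hSI0 : S 0 + I 0 ≤ N) {t : ℝ} (ht : 0 ≤ t) : 0 ≤ S t ∧ 0 ≤ I t ∧ S t + I t ≤ N := by
  have hI : ∀ t, 0 ≤ t → 0 < I t := fun _ => h.infected_pos hξ hI0
  have hSI : ∀ t, 0 ≤ t → S t + I t ≤ N := fun _ =>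
    h.susceptible_add_infected_le hξ hb hc (fun t ht => (hI t ht).le) hSI0
  exact ⟨(h.susceptible_pos hξ hc hSI hS0 ht).le, (hI t ht).le, hSI t ht⟩

theorem susceptible_mul_exp_le (hξ : IsSwitchingSignal ξ) (h : IsSIRSSolution N a b c ξ S I)
    (hinv : ∀ t, 0 ≤ t → 0 ≤ S t ∧ 0 ≤ I t ∧ S t + I t ≤ N) (ha : ∀ σ, 0 ≤ a σ) {A : ℝ}
    (hA : ∀ σ, a σ ≤ A) (hc : ∀ σ, 0 ≤ c σ) {u v : ℝ} (hu : 0 ≤ u) (huv : u ≤ v) :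
    S u * Real.exp (-(A * N) * (v - u)) ≤ S v := by
  refine hξ.mul_exp_le_of_hasDerivWithinAt hu huv (h.1.mono fun s hs => hu.trans hs.1)
    (fun x hx hξx => h.hasDerivWithinAt_susceptible (hu.trans hx.1.le) hξx) fun x hx _ => ?_
  obtain ⟨hS, hI, hSI⟩ := hinv x (hu.trans hx.1.le)
  have haI : a (ξ x) * I x ≤ A * N :=
    mul_le_mul (hA _) (by linarith) hI ((ha (ξ x)).trans (hA (ξ x)))
  have := mul_le_mul_of_nonneg_right haI hS
  have := mul_nonneg (hc (ξ x)) (sub_nonneg.2 hSI)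
  linarith

theorem infected_le_mul_exp_s6 (hξ : IsSwitchingSignal ξ) (h : IsSIRSSolution N a b c ξ S I)
    (hinv : ∀ t, 0 ≤ t → 0 ≤ S t ∧ 0 ≤ I t ∧ S t + I t ≤ N) (ha : ∀ σ, 0 ≤ a σ) {δ β : ℝ}
    (hdecay : ∀ σ, a σ * δ + β ≤ b σ) {u v : ℝ} (hu : 0 ≤ u) (huv : u ≤ v)
    (hSδ : ∀ x ∈ Ioo u v, S x ≤ δ) : I v ≤ I u * Real.exp (-β * (v - u)) := by
  have key := hξ.mul_exp_le_of_hasDerivWithinAt (f := fun t => -I t) (μ := -β) hu huv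
    (h.2.1.mono fun s hs => hu.trans hs.1).neg
    (fun x hx hξx => (h.hasDerivWithinAt_infected (hu.trans hx.1.le) hξx).neg) fun x hx _ => by
      obtain ⟨hS, hI, -⟩ := hinv x (hu.trans hx.1.le)
      have := mul_le_mul_of_nonneg_left (hSδ x hx) (ha (ξ x))
      have := mul_nonneg (by linarith [hdecay (ξ x)] : 0 ≤ b (ξ x) - a (ξ x) * S x - β) hI
      linarith
  linarith

theorem add_mul_le_susceptible (hξ : IsSwitchingSignal ξ) (h : IsSIRSSolution N a b c ξ S I)
    (hinv : ∀ t, 0 ≤ t → 0 ≤ S t ∧ 0 ≤ I t ∧ S t + I t ≤ N) (ha : ∀ σ, 0 ≤ a σ) {A cmin δ ε : ℝ}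
    (hA : ∀ σ, a σ ≤ A) (hcmin : 0 ≤ cmin) (hcmin_le : ∀ σ, cmin ≤ c σ) (hδ : 0 ≤ δ)
    {u v : ℝ} (hu : 0 ≤ u) (huv : u ≤ v) (hSδ : ∀ x ∈ Ioo u v, S x ≤ δ)
    (hIε : ∀ x ∈ Ioo u v, I x ≤ ε) :
    S u + (cmin * (N - δ - ε) - A * δ * ε) * (v - u) ≤ S v := by
  refine hξ.add_mul_le_of_hasDerivWithinAt hu huv (h.1.mono fun s hs => hu.trans hs.1)
    (fun x hx hξx => h.hasDerivWithinAt_susceptible (hu.trans hx.1.le) hξx) fun x hx _ => ?_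
  obtain ⟨hS, hI, hSI⟩ := hinv x (hu.trans hx.1.le)
  have haS : a (ξ x) * S x ≤ A * δ := mul_le_mul (hA _) (hSδ x hx) hS ((ha (ξ x)).trans (hA (ξ x)))
  have hAδ : 0 ≤ A * δ := mul_nonneg ((ha true).trans (hA true)) hδ
  have h1 := mul_le_mul haS (hIε x hx) hI hAδ
  have h2 := mul_le_mul_of_nonneg_right (hcmin_le (ξ x)) (sub_nonneg.2 hSI)
  have h3 := mul_le_mul_of_nonneg_left (by linarith [hSδ x hx, hIε x hx] :
    N - δ - ε ≤ N - S x - I x) hcmin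
  linarith

end IsSIRSSolution

/-- While `S ≤ δ`, the infected decay at rate `β` (`decay`); after a time `τ` spent there they
are below `ε`, and from then on `S` grows at the positive rate `cmin * (N - δ - ε) - A * δ * ε`
(`growth`). -/
structure DipConstants (N : ℝ) (a b c : Env → ℝ) where
  A : ℝ
  cmin : ℝ
  δ : ℝ
  β : ℝ
  τ : ℝ
  ε : ℝ
  le_A : ∀ σ, a σ ≤ A
  cmin_nonneg : 0 ≤ cmin
  cmin_le : ∀ σ, cmin ≤ c σ
  δ_pos : 0 < δ
  β_nonneg : 0 ≤ β
  τ_nonneg : 0 ≤ τ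
  decay : ∀ σ, a σ * δ + β ≤ b σ
  exp_le : N * Real.exp (-(β * τ)) ≤ ε
  growth : A * δ * ε < cmin * (N - δ - ε)

namespace DipConstants

variable {N : ℝ} {a b c : Env → ℝ} {ξ : ℝ → Env} {S I : ℝ → ℝ} (k : DipConstants N a b c)

theorem nonempty (hN : 0 < N) (ha : ∀ σ, 0 < a σ) (hb : ∀ σ, 0 < b σ) (hc : ∀ σ, 0 < c σ) :
    Nonempty (DipConstants N a b c) := by
  have hA : ∀ σ, a σ ≤ ⨆ σ, a σ := le_ciSup (Finite.bddAbove_range a)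
  have hbmin : ∀ σ, ⨅ σ, b σ ≤ b σ := ciInf_le (Finite.bddBelow_range b)
  have hbpos : 0 < ⨅ σ, b σ := by
    obtain ⟨σ, hσ⟩ := exists_eq_ciInf_of_finite (f := b); exact hσ ▸ hb σ
  have hcpos : 0 < ⨅ σ, c σ := by
    obtain ⟨σ, hσ⟩ := exists_eq_ciInf_of_finite (f := c); exact hσ ▸ hc σ
  set A := ⨆ σ, a σ
  set bmin := ⨅ σ, b σ
  set cmin := ⨅ σ, c σ
  have hApos : 0 < A := (ha true).trans_le (hA true)
  set δ := min (bmin / (2 * A)) (N / 2)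
  have hδ : 0 < δ := lt_min (by positivity) (by positivity)
  have hδN : δ < N := (min_le_right _ _).trans_lt (half_lt_self hN)
  have hdecay : ∀ σ, a σ * δ + bmin / 2 ≤ b σ := fun σ => by
    have h1 : a σ * δ ≤ A * (bmin / (2 * A)) := mul_le_mul (hA σ) (min_le_left _ _) hδ.le hApos.le
    have h2 : A * (bmin / (2 * A)) = bmin / 2 := by field_simp
    linarith [hbmin σ]
  have hε : Tendsto (fun τ => N * Real.exp (-(bmin / 2 * τ))) atTop (𝓝 0) := by
    simpa using (Real.tendsto_exp_neg_atTop_nhds_zero.comp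
      (tendsto_id.const_mul_atTop (half_pos hbpos))).const_mul N
  have hcont : Continuous fun ε => cmin * (N - δ - ε) - A * δ * ε := by fun_prop
  have hgap := (hcont.tendsto 0).comp hε
  simp only [sub_zero, mul_zero] at hgap
  obtain ⟨τ, hτ, hgrowth⟩ := ((eventually_ge_atTop 0).and
    (hgap.eventually_const_lt (mul_pos hcpos (sub_pos.2 hδN)))).exists
  exact ⟨⟨A, cmin, δ, bmin / 2, τ, N * Real.exp (-(bmin / 2 * τ)), hA, hcpos.le,
    ciInf_le (Finite.bddBelow_range c), hδ, (half_pos hbpos).le, hτ, hdecay, le_rfl,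
    by simp only [Function.comp] at hgrowth; linarith⟩⟩

def rate : ℝ := k.cmin * (N - k.δ - k.ε) - k.A * k.δ * k.ε

noncomputable def lowerBound : ℝ := k.δ * Real.exp (-(k.A * N) * k.τ)

theorem rate_pos : 0 < k.rate := sub_pos.2 k.growth

theorem lowerBound_pos : 0 < k.lowerBound := mul_pos k.δ_pos (Real.exp_pos _)

theorem infected_le (hξ : IsSwitchingSignal ξ) (h : IsSIRSSolution N a b c ξ S I)
    (hinv : ∀ t, 0 ≤ t → 0 ≤ S t ∧ 0 ≤ I t ∧ S t + I t ≤ N) (ha : ∀ σ, 0 ≤ a σ) {t₁ x : ℝ}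
    (ht₁ : 0 ≤ t₁) (hx : t₁ + k.τ ≤ x) (hSδ : ∀ s ∈ Ioo t₁ x, S s ≤ k.δ) : I x ≤ k.ε := by
  obtain ⟨hS, hI, hSI⟩ := hinv t₁ ht₁
  have hexp : Real.exp (-k.β * (x - t₁)) ≤ Real.exp (-(k.β * k.τ)) :=
    Real.exp_le_exp.2 (by nlinarith [k.β_nonneg])
  calc I x ≤ I t₁ * Real.exp (-k.β * (x - t₁)) :=
        h.infected_le_mul_exp_s6 hξ hinv ha k.decay ht₁ (by linarith [k.τ_nonneg]) hSδ
    _ ≤ N * Real.exp (-(k.β * k.τ)) :=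
        mul_le_mul (by linarith) hexp (Real.exp_pos _).le (by linarith)
    _ ≤ k.ε := k.exp_le

theorem add_rate_mul_le_susceptible (hξ : IsSwitchingSignal ξ)
    (h : IsSIRSSolution N a b c ξ S I) (hinv : ∀ t, 0 ≤ t → 0 ≤ S t ∧ 0 ≤ I t ∧ S t + I t ≤ N)
    (ha : ∀ σ, 0 ≤ a σ) {t₁ u v : ℝ} (ht₁ : 0 ≤ t₁) (hu : t₁ + k.τ ≤ u) (huv : u ≤ v)
    (hSδ : ∀ s ∈ Ioo t₁ v, S s ≤ k.δ) : S u + k.rate * (v - u) ≤ S v := by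
  have hu₀ : 0 ≤ u := by linarith [k.τ_nonneg]
  have hsub : Ioo u v ⊆ Ioo t₁ v := Ioo_subset_Ioo_left (by linarith [k.τ_nonneg])
  exact h.add_mul_le_susceptible hξ hinv ha k.le_A k.cmin_nonneg k.cmin_le k.δ_pos.le hu₀ huv
    (fun x hx => hSδ x (hsub hx))
    (fun x hx => k.infected_le hξ h hinv ha ht₁ (hu.trans hx.1.le)
      fun s hs => hSδ s ⟨hs.1, hs.2.trans hx.2⟩)

theorem susceptible_mul_exp_le_of_dip (hξ : IsSwitchingSignal ξ)
    (h : IsSIRSSolution N a b c ξ S I) (hinv : ∀ t, 0 ≤ t → 0 ≤ S t ∧ 0 ≤ I t ∧ S t + I t ≤ N)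
    (ha : ∀ σ, 0 ≤ a σ) {t₁ t₂ : ℝ} (ht₁ : 0 ≤ t₁) (h₁₂ : t₁ ≤ t₂)
    (hSδ : ∀ s ∈ Ioo t₁ t₂, S s ≤ k.δ) : S t₁ * Real.exp (-(k.A * N) * k.τ) ≤ S t₂ := by
  have hc : ∀ σ, 0 ≤ c σ := fun σ => k.cmin_nonneg.trans (k.cmin_le σ)
  have hAN : 0 ≤ k.A * N := by
    obtain ⟨hS, hI, hSI⟩ := hinv 0 le_rfl
    exact mul_nonneg ((ha true).trans (k.le_A true)) (by linarith)
  have hS₁ := (hinv t₁ ht₁).1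
  rcases le_or_gt t₂ (t₁ + k.τ) with hshort | hlong
  · calc S t₁ * Real.exp (-(k.A * N) * k.τ) ≤ S t₁ * Real.exp (-(k.A * N) * (t₂ - t₁)) :=
          mul_le_mul_of_nonneg_left (Real.exp_le_exp.2 (by nlinarith)) hS₁
      _ ≤ S t₂ := h.susceptible_mul_exp_le hξ hinv ha k.le_A hc ht₁ h₁₂
  · have := k.add_rate_mul_le_susceptible hξ h hinv ha ht₁ le_rfl hlong.le hSδ
    have := h.susceptible_mul_exp_le hξ hinv ha k.le_A hc ht₁ (le_add_of_nonneg_right k.τ_nonneg)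
    rw [add_sub_cancel_left] at this
    nlinarith [k.rate_pos]

theorem exists_le_susceptible (hξ : IsSwitchingSignal ξ) (h : IsSIRSSolution N a b c ξ S I)
    (hinv : ∀ t, 0 ≤ t → 0 ≤ S t ∧ 0 ≤ I t ∧ S t + I t ≤ N) (ha : ∀ σ, 0 ≤ a σ) :
    ∃ T, 0 ≤ T ∧ k.δ ≤ S T := by
  by_contra! hsmall
  set T := k.τ + k.δ / k.rate
  have hT : k.τ ≤ T := le_add_of_nonneg_right (div_pos k.δ_pos k.rate_pos).le
  have hgrowth := k.add_rate_mul_le_susceptible hξ h hinv ha le_rfl (zero_add k.τ).le hT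
    fun s hs => (hsmall s hs.1.le).le
  have : k.rate * (T - k.τ) = k.δ := by
    simp only [T, add_sub_cancel_left, mul_div_cancel₀ _ k.rate_pos.ne']
  linarith [(hinv k.τ k.τ_nonneg).1, hsmall T (k.τ_nonneg.trans hT)]

theorem eventually_lowerBound_le (hξ : IsSwitchingSignal ξ) (h : IsSIRSSolution N a b c ξ S I)
    (hinv : ∀ t, 0 ≤ t → 0 ≤ S t ∧ 0 ≤ I t ∧ S t + I t ≤ N) (ha : ∀ σ, 0 ≤ a σ) :
    ∀ᶠ t in atTop, k.lowerBound ≤ S t := by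
  obtain ⟨T, hT, hδT⟩ := k.exists_le_susceptible hξ h hinv ha
  refine eventually_atTop.2 ⟨T, fun t ht => ?_⟩
  obtain ⟨u, hu, hδu, hdip⟩ :=
    exists_mem_Icc_le_forall_Ioc_lt ht (h.1.mono fun s hs => hT.trans hs.1) hδT
  calc k.lowerBound ≤ S u * Real.exp (-(k.A * N) * k.τ) :=
        mul_le_mul_of_nonneg_right hδu (Real.exp_pos _).le
    _ ≤ S t := k.susceptible_mul_exp_le_of_dip hξ h hinv ha (hT.trans hu.1) hu.2
        fun s hs => (hdip s (Ioo_subset_Ioc_self hs)).le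

end DipConstants

theorem sirs_susceptibles_ultimately_bounded_below_general
    (N : ℝ) (hN : 0 < N) (a b c : Env → ℝ)
    (ha : ∀ σ, 0 < a σ) (hb : ∀ σ, 0 < b σ) (hc : ∀ σ, 0 < c σ) :
    ∃ Smin : ℝ, 0 < Smin ∧
      ∀ (ξ : ℝ → Env), IsSwitchingSignal ξ →
      ∀ (S I : ℝ → ℝ), IsSIRSSolution N a b c ξ S I →
      0 < S 0 → 0 < I 0 → S 0 + I 0 ≤ N →
      Smin < Filter.liminf S Filter.atTop := by
  obtain ⟨k⟩ := DipConstants.nonempty hN ha hb hc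
  refine ⟨k.lowerBound / 2, half_pos k.lowerBound_pos, fun ξ hξ S I h hS0 hI0 hSI0 => ?_⟩
  have hinv := fun t (ht : 0 ≤ t) =>
    h.nonneg_and_add_le hξ (fun σ => (hb σ).le) (fun σ => (hc σ).le) hS0 hI0 hSI0 ht
  have hbdd : IsBoundedUnder (· ≤ ·) atTop S := isBoundedUnder_of_eventually_le (a := N)
    (eventually_atTop.2 ⟨0, fun t ht => by linarith [(hinv t ht).2.1, (hinv t ht).2.2]⟩)
  calc k.lowerBound / 2 < k.lowerBound := half_lt_self k.lowerBound_pos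
    _ ≤ liminf S atTop := le_liminf_of_le hbdd.isCoboundedUnder_ge
        (k.eventually_lowerBound_le hξ h hinv fun σ => (ha σ).le)

/-- `S` is ultimately bounded below by a constant `S_min > 0`
depending only on `N, a, b, c`. -/
theorem sirs_susceptibles_ultimately_bounded_below
    (N : ℝ) (hN : 0 < N) (a b c : Env → ℝ)
    (ha : ∀ σ, 0 < a σ) (hb : ∀ σ, 0 < b σ) (hc : ∀ σ, 0 < c σ)
    (horder : b true / a true ≤ b false / a false)
    (hsup : b true / a true < N) :
    ∃ Smin : ℝ, 0 < Smin ∧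
      ∀ (ξ : ℝ → Env), IsSwitchingSignal ξ →
      ∀ (S I : ℝ → ℝ), IsSIRSSolution N a b c ξ S I →
      0 < S 0 → 0 < I 0 → S 0 + I 0 ≤ N →
      Smin < Filter.liminf S Filter.atTop :=
  sirs_susceptibles_ultimately_bounded_below_general N hN a b c ha hb hc
end
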